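/- arXiv:1010.0947 — 7 statements merged into one kernel-verified Lean document; each statement's English description precedes it below -/
import Mathlib

section
/- Let G be the disjoint union of n complete graphs G_1, …, G_n, each with at least 2 vertices, let r ≤ n, and let 2 ≤ k ≤ min_i |G_i|. If A_1, …, A_k are cross-intersecting families of independent sets of size r in G, then the sum of their cardinalities is at most the total number of independent sets of size r in G. -/
/-- A finset of vertices is independent in `G`. -/
def IndepFinset {V : Type*} (G : SimpleGraph V) (A : Finset V) : Prop :=
  ∀ u ∈ A, ∀ v ∈ A, ¬ G.Adj u v

/-- The disjoint union of `n` complete graphs, the `i`-th one on `m i` vertices: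
two distinct vertices are adjacent iff they lie in the same component. -/
def cliqueUnion (n : ℕ) (m : Fin n → ℕ) : SimpleGraph (Σ i : Fin n, Fin (m i)) :=
  SimpleGraph.fromRel (fun a b => a.1 = b.1)

/-!
Shift the `t`-th family by rotating every clique `t` steps. The shifted sets are again
independent sets of size `r`, and no two of them coincide: if `A ∈ 𝒜 s` and `B ∈ 𝒜 t` with
`s ≠ t` share a vertex `v`, then equality of the shifts would put `v` rotated by `t` into `A`
rotated by `s`, forcing (since `A` meets each clique at most once) `v` rotated by `s` and by `t`
to agree, which is impossible as `s, t < k ≤ |G_i|`. Hence `(t, A) ↦ shift_t A` injects the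
disjoint union of the families into the independent `r`-sets.
-/

open Finset Function

section CrossIntersecting

variable {ι V α : Type*} (p : V → α) (σ : ι → V ↪ V)

theorem map_ne_map_of_inter_nonempty [DecidableEq V] (hσp : ∀ t v, p (σ t v) = p v) {s t : ι}
    (hst : ∀ v, σ s v ≠ σ t v) {A B : Finset V} (hA : Set.InjOn p A)
    (hAB : (A ∩ B).Nonempty) : A.map (σ s) ≠ B.map (σ t) := by
  intro h
  obtain ⟨v, hv⟩ := hAB
  obtain ⟨hvA, hvB⟩ := mem_inter.1 hv
  obtain ⟨u, huA, hu⟩ := mem_map.1 (h ▸ mem_map_of_mem (σ t) hvB)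
  have huv : u = v := hA huA hvA (by rw [← hσp s u, hu, hσp])
  exact hst v (huv ▸ hu)

/-- The shifts `A ↦ A.map (σ t)` make the families pairwise disjoint inside `𝒮`. -/
theorem sum_card_le_card_of_crossIntersecting [Fintype ι] [DecidableEq V]
    (hσp : ∀ t v, p (σ t v) = p v)
    (hσ : Pairwise fun s t => ∀ v, σ s v ≠ σ t v) (𝒜 : ι → Finset (Finset V))
    (𝒮 : Finset (Finset V)) (hmaps : ∀ t, ∀ A ∈ 𝒜 t, A.map (σ t) ∈ 𝒮)
    (htrans : ∀ t, ∀ A ∈ 𝒜 t, Set.InjOn p A)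
    (hcross : ∀ s t, s ≠ t → ∀ A ∈ 𝒜 s, ∀ B ∈ 𝒜 t, (A ∩ B).Nonempty) :
    ∑ t, #(𝒜 t) ≤ #𝒮 := by
  rw [← card_sigma]
  refine card_le_card_of_injOn (fun x => x.2.map (σ x.1)) ?_ ?_
  · rintro ⟨t, A⟩ hA
    exact hmaps t A (mem_sigma.1 hA).2
  · rintro ⟨s, A⟩ hA ⟨t, B⟩ hB h
    simp only [mem_coe, mem_sigma, mem_univ, true_and] at hA hB
    by_cases hst : s = t
    · subst hst
      exact congrArg (Sigma.mk s) (map_injective (σ s) h)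
    · exact absurd h (map_ne_map_of_inter_nonempty p σ hσp (hσ hst) (htrans s A hA)
        (hcross s t hst A hA B hB))

end CrossIntersecting

section Rotation

/-- Written with `%` rather than `Fin` addition so that no `NeZero m` is needed. -/
def finRotateBy (m t : ℕ) (x : Fin m) : Fin m :=
  ⟨(x + t) % m, Nat.mod_lt _ x.pos⟩

theorem finRotateBy_injective (m t : ℕ) : Injective (finRotateBy m t) := by
  intro x y h
  have hxy : (x : ℕ) + t ≡ y + t [MOD m] := congrArg Fin.val h
  exact Fin.ext (by simpa [Nat.ModEq, Nat.mod_eq_of_lt] using Nat.ModEq.add_right_cancel' t hxy)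

theorem finRotateBy_ne {m s t : ℕ} (hs : s < m) (ht : t < m) (hst : s ≠ t) (x : Fin m) :
    finRotateBy m s x ≠ finRotateBy m t x := by
  intro h
  have hxst : (x : ℕ) + s ≡ x + t [MOD m] := congrArg Fin.val h
  exact hst (by simpa [Nat.ModEq, Nat.mod_eq_of_lt hs, Nat.mod_eq_of_lt ht]
    using Nat.ModEq.add_left_cancel' (x : ℕ) hxst)

def sigmaRotate {n : ℕ} (m : Fin n → ℕ) (t : ℕ) : (Σ i, Fin (m i)) ↪ (Σ i, Fin (m i)) :=
  ⟨Sigma.map id fun i => finRotateBy (m i) t,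
    injective_id.sigma_map fun i => finRotateBy_injective (m i) t⟩

theorem sigmaRotate_fst {n : ℕ} (m : Fin n → ℕ) (t : ℕ) (v : Σ i, Fin (m i)) :
    (sigmaRotate m t v).1 = v.1 :=
  rfl

theorem sigmaRotate_ne {n k : ℕ} {m : Fin n → ℕ} (hk : ∀ i, k ≤ m i) :
    Pairwise fun s t : Fin k => ∀ v, sigmaRotate m s v ≠ sigmaRotate m t v := by
  intro s t hst v h
  refine finRotateBy_ne (s.2.trans_le (hk v.1)) (t.2.trans_le (hk v.1)) (Fin.val_injective.ne hst)
    v.2 ?_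
  exact eq_of_heq (Sigma.mk.inj_iff.1 h).2

end Rotation

theorem cliqueUnion_adj {n : ℕ} {m : Fin n → ℕ} {u v : Σ i, Fin (m i)} :
    (cliqueUnion n m).Adj u v ↔ u ≠ v ∧ u.1 = v.1 := by
  simp [cliqueUnion, eq_comm]

theorem indepFinset_cliqueUnion_iff {n : ℕ} {m : Fin n → ℕ} {A : Finset (Σ i, Fin (m i))} :
    IndepFinset (cliqueUnion n m) A ↔ Set.InjOn Sigma.fst (A : Set (Σ i, Fin (m i))) := by
  simp only [IndepFinset, cliqueUnion_adj, not_and, Set.InjOn, mem_coe]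
  exact ⟨fun h u hu v hv huv => by_contra fun hne => h u hu v hv hne huv,
    fun h u hu v hv hne huv => hne (h hu hv huv)⟩

theorem stmt7_general (n : ℕ) (m : Fin n → ℕ) (r k : ℕ)
    (hk : ∀ i, k ≤ m i)
    (𝒜 : Fin k → Finset (Finset (Σ i : Fin n, Fin (m i))))
    (hind : ∀ i, ∀ A ∈ 𝒜 i, IndepFinset (cliqueUnion n m) A ∧ A.card = r)
    (hcross : ∀ i j, i ≠ j → ∀ A ∈ 𝒜 i, ∀ B ∈ 𝒜 j, (A ∩ B).Nonempty) :
    ∑ i, (𝒜 i).card ≤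
      Set.ncard {A : Finset (Σ i : Fin n, Fin (m i)) |
        IndepFinset (cliqueUnion n m) A ∧ A.card = r} := by
  classical
  rw [Set.ncard_eq_toFinset_card']
  refine sum_card_le_card_of_crossIntersecting Sigma.fst (fun t : Fin k => sigmaRotate m t)
    (sigmaRotate_fst m ·) (sigmaRotate_ne hk) 𝒜 _ (fun t A hA => ?_)
    (fun t A hA => indepFinset_cliqueUnion_iff.1 (hind t A hA).1) hcross
  obtain ⟨hAind, hAcard⟩ := hind t A hA
  rw [Set.mem_toFinset, Set.mem_ofPred_eq, indepFinset_cliqueUnion_iff, coe_map, card_map]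
  exact ⟨Set.InjOn.image_of_comp (f := sigmaRotate m t) (indepFinset_cliqueUnion_iff.1 hAind),
    hAcard⟩

theorem stmt7 (n : ℕ) (m : Fin n → ℕ) (hm : ∀ i, 2 ≤ m i) (r k : ℕ)
    (hr : r ≤ n) (hk2 : 2 ≤ k) (hk : ∀ i, k ≤ m i)
    (𝒜 : Fin k → Finset (Finset (Σ i : Fin n, Fin (m i))))
    (hind : ∀ i, ∀ A ∈ 𝒜 i, IndepFinset (cliqueUnion n m) A ∧ A.card = r)
    (hcross : ∀ i j, i ≠ j → ∀ A ∈ 𝒜 i, ∀ B ∈ 𝒜 j, (A ∩ B).Nonempty) :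
    ∑ i, (𝒜 i).card ≤
      Set.ncard {A : Finset (Σ i : Fin n, Fin (m i)) |
        IndepFinset (cliqueUnion n m) A ∧ A.card = r} :=
  stmt7_general n m r k hk 𝒜 hind hcross
end

section
/- Let M_n be a perfect matching on 2n vertices (n disjoint edges), and let r ≤ n. If (A, B) is a cross-intersecting pair of families of independent sets of size r in M_n, then |A| + |B| ≤ 2^r · C(n, r). Moreover, if r < n, equality holds if and only if one of the two families is all of J^r(M_n) and the other is empty. -/
/-- The perfect matching `M_n` on `2n` vertices: `n` pairwise disjoint edges. -/
def matchingGraph (n : ℕ) : SimpleGraph (Fin n × Fin 2) :=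
  SimpleGraph.fromRel (fun a b => a.1 = b.1)

/-!
Let `mate` swap the two ends of every edge. For an independent set `A`, its image `σA` under
`mate` is an independent set disjoint from `A`. So if `(𝒜, ℬ)` is cross-intersecting, `σ𝒜` and `ℬ`
are disjoint subfamilies of `J^r`, and `|J^r| = 2^r C(n, r)` because an independent `r`-set is an
`r`-set of edges together with a choice of an end of each.

In the equality case `σ𝒜 ∪ ℬ = J^r`, so `𝒜` contains every `B ∈ J^r` for which `A ∪ B` is
independent for some `A ∈ 𝒜`: otherwise `σB ∈ ℬ` would miss `A`. When `r < n`, any two members of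
`J^r` are joined by a chain of such steps, each exchanging a single vertex, so a nonempty `𝒜` is
all of `J^r`, and then `ℬ = ∅`.
-/

open Finset

namespace Matching

variable {ι : Type*}

def mate (p : ι × Fin 2) : ι × Fin 2 := (p.1, p.2.rev)

lemma mate_involutive : Function.Involutive (mate (ι := ι)) :=
  fun p => Prod.ext rfl (Fin.rev_rev p.2)

lemma mate_ne (p : ι × Fin 2) : mate p ≠ p := by
  have : ∀ j : Fin 2, j.rev ≠ j := by decide
  exact fun h => this p.2 (congrArg Prod.snd h)

variable [DecidableEq ι]

lemma injOn_image_mate {A : Finset (ι × Fin 2)} (hA : Set.InjOn Prod.fst (A : Set (ι × Fin 2))) :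
    Set.InjOn Prod.fst (A.image mate : Set (ι × Fin 2)) := by
  simp only [coe_image]
  rintro _ ⟨p, hp, rfl⟩ _ ⟨q, hq, rfl⟩ h
  rw [hA hp hq h]

lemma disjoint_image_mate_of_injOn_union {A B : Finset (ι × Fin 2)}
    (h : Set.InjOn Prod.fst ((A ∪ B : Finset (ι × Fin 2)) : Set (ι × Fin 2))) :
    Disjoint A (B.image mate) := by
  simp only [disjoint_left, mem_image, not_exists, not_and]
  rintro _ ha b hb rfl
  exact mate_ne b (h (by simp [ha]) (by simp [hb]) rfl)

lemma image_mate_involutive : Function.Involutive (image (mate (ι := ι))) := fun A => by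
  rw [image_image, mate_involutive.comp_self, image_id]

lemma injOn_insert_of_fst_ne {A : Finset (ι × Fin 2)}
    (hA : Set.InjOn Prod.fst (A : Set (ι × Fin 2))) {p : ι × Fin 2} (hp : ∀ x ∈ A, x.1 ≠ p.1) :
    Set.InjOn Prod.fst ((insert p A : Finset (ι × Fin 2)) : Set (ι × Fin 2)) := by
  rw [coe_insert, Set.injOn_insert fun h => hp p h rfl]
  exact ⟨hA, fun ⟨x, hx, hxp⟩ => hp x hx hxp⟩

variable [Fintype ι]

variable (ι) in
open Classical in
/-- `J^r` of the perfect matching on `ι × Fin 2` whose edges are the fibres `{i} × Fin 2`. -/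
noncomputable def indepSets (r : ℕ) : Finset (Finset (ι × Fin 2)) :=
  {A | Set.InjOn Prod.fst (A : Set (ι × Fin 2)) ∧ #A = r}

lemma mem_indepSets {r : ℕ} {A : Finset (ι × Fin 2)} :
    A ∈ indepSets ι r ↔ Set.InjOn Prod.fst (A : Set (ι × Fin 2)) ∧ #A = r := by
  simp [indepSets]

lemma image_mate_mem_indepSets {r : ℕ} {A : Finset (ι × Fin 2)} (hA : A ∈ indepSets ι r) :
    A.image mate ∈ indepSets ι r := by
  rw [mem_indepSets] at hA ⊢
  exact ⟨injOn_image_mate hA.1, by rw [card_image_of_injective _ mate_involutive.injective, hA.2]⟩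

lemma card_fiber_indepSets (S : Finset ι) :
    #{A ∈ indepSets ι #S | A.image Prod.fst = S} = 2 ^ #S := by
  rw [← card_powerset]
  refine card_nbij' (fun A => {i ∈ S | (i, 1) ∈ A})
    (fun T => S.image fun i => (i, if i ∈ T then 1 else 0)) (fun A _ => ?_) ?_ ?_ ?_
  · simp only [coe_powerset, Set.mem_preimage, Set.mem_powerset_iff, coe_subset]
    exact filter_subset _ S
  · intro T hT
    simp only [coe_powerset, Set.mem_preimage, Set.mem_powerset_iff, coe_subset] at hT
    have hinj : Function.Injective fun i : ι => ((i, if i ∈ T then 1 else 0) : ι × Fin 2) :=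
      fun _ _ h => congrArg Prod.fst h
    simp only [coe_filter, Set.mem_ofPred_eq, mem_indepSets]
    refine ⟨⟨?_, card_image_of_injective _ hinj⟩, by simp [image_image, Function.comp_def]⟩
    rw [coe_image]
    rintro _ ⟨a, -, rfl⟩ _ ⟨b, -, rfl⟩ h
    simp_all
  · intro A hA
    simp only [coe_filter, Set.mem_ofPred_eq, mem_indepSets] at hA
    obtain ⟨⟨hinj, -⟩, rfl⟩ := hA
    ext ⟨i, j⟩
    have hboth : ¬((i, 0) ∈ A ∧ (i, 1) ∈ A) := fun h => by simpa using hinj h.1 h.2 rfl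
    fin_cases j <;> by_cases (i, 1) ∈ A <;> simp_all
  · intro T hT
    simp only [coe_powerset, Set.mem_preimage, Set.mem_powerset_iff, coe_subset] at hT
    ext i
    simpa using @hT i

lemma card_indepSets (r : ℕ) : #(indepSets ι r) = 2 ^ r * (Fintype.card ι).choose r := by
  have hfst : ∀ A ∈ indepSets ι r, A.image Prod.fst ∈ powersetCard r (univ : Finset ι) := by
    intro A hA
    rw [mem_indepSets] at hA
    simp [mem_powersetCard, card_image_of_injOn hA.1, hA.2]
  rw [card_eq_sum_card_fiberwise hfst, sum_congr rfl fun S hS => ?_, sum_const, card_powersetCard,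
    card_univ, smul_eq_mul, mul_comm]
  obtain rfl := (mem_powersetCard.1 hS).2
  exact card_fiber_indepSets S

section CrossIntersecting

variable {r : ℕ} {𝒜 ℬ : Finset (Finset (ι × Fin 2))} (h𝒜 : 𝒜 ⊆ indepSets ι r)
  (hℬ : ℬ ⊆ indepSets ι r) (hcross : ∀ A ∈ 𝒜, ∀ B ∈ ℬ, (A ∩ B).Nonempty)
include h𝒜

include hℬ in
lemma image_image_mate_union_subset : 𝒜.image (image mate) ∪ ℬ ⊆ indepSets ι r := by
  refine union_subset (fun C hC => ?_) hℬ
  obtain ⟨A, hA, rfl⟩ := mem_image.1 hC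
  exact image_mate_mem_indepSets (h𝒜 hA)

include hcross

lemma disjoint_image_image_mate : Disjoint (𝒜.image (image mate)) ℬ := by
  rw [disjoint_left]
  intro C hC hCB
  obtain ⟨A, hA, rfl⟩ := mem_image.1 hC
  have hA' : Set.InjOn Prod.fst ((A ∪ A : Finset _) : Set (ι × Fin 2)) := by
    rw [union_self]
    exact (mem_indepSets.1 (h𝒜 hA)).1
  exact (hcross A hA _ hCB).ne_empty
    (disjoint_iff_inter_eq_empty.1 (disjoint_image_mate_of_injOn_union hA'))

include hℬ

lemma card_add_card_le_card_indepSets : #𝒜 + #ℬ ≤ #(indepSets ι r) := by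
  rw [← card_image_of_injective _ image_mate_involutive.injective,
    ← card_union_of_disjoint (disjoint_image_image_mate h𝒜 hcross)]
  exact card_le_card (image_image_mate_union_subset h𝒜 hℬ)

lemma mem_of_injOn_union (heq : #𝒜 + #ℬ = #(indepSets ι r)) {A B : Finset (ι × Fin 2)}
    (hA : A ∈ 𝒜) (hB : B ∈ indepSets ι r)
    (hAB : Set.InjOn Prod.fst ((A ∪ B : Finset (ι × Fin 2)) : Set (ι × Fin 2))) : B ∈ 𝒜 := by
  have hunion : 𝒜.image (image mate) ∪ ℬ = indepSets ι r := by
    refine eq_of_subset_of_card_le (image_image_mate_union_subset h𝒜 hℬ) ?_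
    rw [card_union_of_disjoint (disjoint_image_image_mate h𝒜 hcross),
      card_image_of_injective _ image_mate_involutive.injective, heq]
  have hmate : B.image mate ∈ 𝒜.image (image mate) ∪ ℬ :=
    hunion ▸ image_mate_mem_indepSets hB
  rcases mem_union.1 hmate with h | h
  · obtain ⟨A', hA', hA'B⟩ := mem_image.1 h
    rwa [← image_mate_involutive.injective hA'B]
  · exact absurd (disjoint_iff_inter_eq_empty.1 (disjoint_image_mate_of_injOn_union hAB))
      (hcross A hA _ h).ne_empty

end CrossIntersecting

lemma insert_erase_mem_indepSets {r : ℕ} {A : Finset (ι × Fin 2)} (hA : A ∈ indepSets ι r)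
    {p q : ι × Fin 2} (hq : q ∈ A) (hp : ∀ x ∈ A, x.1 ≠ p.1) :
    insert p (A.erase q) ∈ indepSets ι r := by
  rw [mem_indepSets] at hA ⊢
  have hpA : p ∉ A.erase q := fun h => hp p (mem_of_mem_erase h) rfl
  refine ⟨injOn_insert_of_fst_ne (hA.1.mono (by simp)) fun x hx => hp x (mem_of_mem_erase hx), ?_⟩
  rw [card_insert_of_notMem hpA, card_erase_add_one hq, hA.2]

section Exchange

variable {r : ℕ} {𝒮 : Finset (Finset (ι × Fin 2))} (h𝒮 : 𝒮 ⊆ indepSets ι r)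
  (hS : ∀ A ∈ 𝒮, ∀ B ∈ indepSets ι r,
    Set.InjOn Prod.fst ((A ∪ B : Finset (ι × Fin 2)) : Set (ι × Fin 2)) → B ∈ 𝒮)
include h𝒮 hS

lemma insert_erase_mem {A : Finset (ι × Fin 2)} (hA : A ∈ 𝒮) {p q : ι × Fin 2} (hq : q ∈ A)
    (hp : ∀ x ∈ A, x.1 ≠ p.1) : insert p (A.erase q) ∈ 𝒮 := by
  refine hS A hA _ (insert_erase_mem_indepSets (h𝒮 hA) hq hp) ?_
  have hsub : A ∪ insert p (A.erase q) ⊆ insert p A :=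
    union_subset (subset_insert p A) (insert_subset_insert p (erase_subset q A))
  exact (injOn_insert_of_fst_ne (mem_indepSets.1 (h𝒮 hA)).1 hp).mono (coe_subset.2 hsub)

lemma exists_insert_erase_mem (hr : r < Fintype.card ι) {A D : Finset (ι × Fin 2)} (hA : A ∈ 𝒮)
    (hD : D ∈ indepSets ι r) {p : ι × Fin 2} (hpD : p ∈ D) (hpA : p ∉ A) :
    ∃ q ∈ A, q ∉ D ∧ insert p (A.erase q) ∈ 𝒮 := by
  obtain ⟨hAinj, hAcard⟩ := mem_indepSets.1 (h𝒮 hA)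
  by_cases hclash : ∃ q ∈ A, q.1 = p.1
  -- Here `q = mate p`, so `A ∪ insert p (A.erase q)` is not independent: detour through a vertex
  -- `(k, 0)` on an edge missed by `A`, which exists since `r < |ι|`.
  · obtain ⟨q, hqA, hqp⟩ := hclash
    have hqD : q ∉ D := fun hqD =>
      hpA ((mem_indepSets.1 hD).1 hqD hpD hqp ▸ hqA)
    obtain ⟨k, -, hk⟩ : ∃ k ∈ (univ : Finset ι), k ∉ A.image Prod.fst := by
      refine exists_mem_notMem_of_card_lt_card ?_
      rw [card_univ]
      exact card_image_le.trans_lt (hAcard ▸ hr)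
    simp only [mem_image, not_exists, not_and] at hk
    have hA₁ : insert (k, 0) (A.erase q) ∈ 𝒮 := insert_erase_mem h𝒮 hS hA hqA hk
    have hkA : (k, (0 : Fin 2)) ∉ A.erase q := fun h => hk _ (mem_of_mem_erase h) rfl
    refine ⟨q, hqA, hqD, ?_⟩
    rw [← erase_insert hkA]
    refine insert_erase_mem h𝒮 hS hA₁ (mem_insert_self _ _) fun x hx hxp => ?_
    rcases mem_insert.1 hx with rfl | hx
    · exact hk q hqA (hqp.trans hxp.symm)
    · exact ne_of_mem_erase hx (hAinj (mem_of_mem_erase hx) hqA (hxp.trans hqp.symm))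
  · push Not at hclash
    obtain ⟨q, hqA, hqD⟩ : ∃ q ∈ A, q ∉ D := by
      refine not_subset.1 fun hAD => hpA ?_
      rwa [eq_of_subset_of_card_le hAD (by rw [hAcard, (mem_indepSets.1 hD).2])]
    exact ⟨q, hqA, hqD, insert_erase_mem h𝒮 hS hA hqA hclash⟩

lemma eq_indepSets (hr : r < Fintype.card ι) (hne : 𝒮.Nonempty) : 𝒮 = indepSets ι r := by
  refine Subset.antisymm h𝒮 fun D hD => ?_
  obtain ⟨A, hA⟩ := hne
  induction hk : #(D \ A) using Nat.strong_induction_on generalizing A with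
  | _ k ih =>
    by_cases hDA : D ⊆ A
    · have hcard : #A ≤ #D := by rw [(mem_indepSets.1 (h𝒮 hA)).2, (mem_indepSets.1 hD).2]
      rwa [eq_of_subset_of_card_le hDA hcard]
    obtain ⟨p, hpD, hpA⟩ := not_subset.1 hDA
    obtain ⟨q, -, hqD, hA'⟩ := exists_insert_erase_mem h𝒮 hS hr hA hD hpD hpA
    have hsdiff : D \ insert p (A.erase q) = (D \ A).erase p := by
      ext x
      simp only [mem_sdiff, mem_insert, mem_erase]
      grind
    refine ih _ ?_ _ hA' rfl
    rw [← hk, hsdiff]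
    exact card_erase_lt_of_mem (mem_sdiff.2 ⟨hpD, hpA⟩)

end Exchange

lemma card_add_card_eq_card_indepSets_iff {r : ℕ} (hr : r < Fintype.card ι)
    {𝒜 ℬ : Finset (Finset (ι × Fin 2))} (h𝒜 : 𝒜 ⊆ indepSets ι r) (hℬ : ℬ ⊆ indepSets ι r)
    (hcross : ∀ A ∈ 𝒜, ∀ B ∈ ℬ, (A ∩ B).Nonempty) :
    #𝒜 + #ℬ = #(indepSets ι r) ↔ 𝒜 = indepSets ι r ∧ ℬ = ∅ ∨ ℬ = indepSets ι r ∧ 𝒜 = ∅ := by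
  refine ⟨fun heq => ?_, ?_⟩
  · rcases 𝒜.eq_empty_or_nonempty with rfl | hne
    · exact .inr ⟨eq_of_subset_of_card_le hℬ (by simpa using heq.ge), rfl⟩
    · have h𝒜J : 𝒜 = indepSets ι r :=
        eq_indepSets h𝒜 (fun _ hA _ hB => mem_of_injOn_union h𝒜 hℬ hcross heq hA hB) hr hne
      refine .inl ⟨h𝒜J, card_eq_zero.1 ?_⟩
      rw [h𝒜J] at heq
      omega
  · rintro (⟨rfl, rfl⟩ | ⟨rfl, rfl⟩) <;> simp

end Matching

open Matching

lemma indepFinset_matchingGraph_iff {n : ℕ} {A : Finset (Fin n × Fin 2)} :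
    IndepFinset (matchingGraph n) A ↔ Set.InjOn Prod.fst (A : Set (Fin n × Fin 2)) := by
  simp only [IndepFinset, matchingGraph, SimpleGraph.fromRel_adj, Set.InjOn, mem_coe]
  grind

theorem stmt8_general (n r : ℕ)
    (𝒜 ℬ : Finset (Finset (Fin n × Fin 2)))
    (h𝒜 : ∀ A ∈ 𝒜, IndepFinset (matchingGraph n) A ∧ A.card = r)
    (hℬ : ∀ B ∈ ℬ, IndepFinset (matchingGraph n) B ∧ B.card = r)
    (hcross : ∀ A ∈ 𝒜, ∀ B ∈ ℬ, (A ∩ B).Nonempty) :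
    𝒜.card + ℬ.card ≤ 2 ^ r * n.choose r ∧
      (r < n →
        (𝒜.card + ℬ.card = 2 ^ r * n.choose r ↔
          ((↑𝒜 = {A : Finset (Fin n × Fin 2) |
              IndepFinset (matchingGraph n) A ∧ A.card = r} ∧ ℬ = ∅) ∨
           (↑ℬ = {A : Finset (Fin n × Fin 2) |
              IndepFinset (matchingGraph n) A ∧ A.card = r} ∧ 𝒜 = ∅)))) := by
  have hJ : ((indepSets (Fin n) r : Finset _) : Set (Finset (Fin n × Fin 2))) =
      {A | IndepFinset (matchingGraph n) A ∧ A.card = r} := by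
    ext A
    simp [mem_indepSets, indepFinset_matchingGraph_iff]
  have hcard : #(indepSets (Fin n) r) = 2 ^ r * n.choose r := by
    rw [card_indepSets, Fintype.card_fin]
  have h𝒜J : 𝒜 ⊆ indepSets (Fin n) r := fun A hA => by simpa [← mem_coe, hJ] using h𝒜 A hA
  have hℬJ : ℬ ⊆ indepSets (Fin n) r := fun B hB => by simpa [← mem_coe, hJ] using hℬ B hB
  rw [← hJ, coe_inj, coe_inj, ← hcard]
  refine ⟨card_add_card_le_card_indepSets h𝒜J hℬJ hcross, fun hr => ?_⟩
  exact card_add_card_eq_card_indepSets_iff (by rwa [Fintype.card_fin]) h𝒜J hℬJ hcross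

theorem stmt8 (n r : ℕ) (hr : r ≤ n)
    (𝒜 ℬ : Finset (Finset (Fin n × Fin 2)))
    (h𝒜 : ∀ A ∈ 𝒜, IndepFinset (matchingGraph n) A ∧ A.card = r)
    (hℬ : ∀ B ∈ ℬ, IndepFinset (matchingGraph n) B ∧ B.card = r)
    (hcross : ∀ A ∈ 𝒜, ∀ B ∈ ℬ, (A ∩ B).Nonempty) :
    𝒜.card + ℬ.card ≤ 2 ^ r * n.choose r ∧
      (r < n →
        (𝒜.card + ℬ.card = 2 ^ r * n.choose r ↔
          ((↑𝒜 = {A : Finset (Fin n × Fin 2) |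
              IndepFinset (matchingGraph n) A ∧ A.card = r} ∧ ℬ = ∅) ∨
           (↑ℬ = {A : Finset (Fin n × Fin 2) |
              IndepFinset (matchingGraph n) A ∧ A.card = r} ∧ 𝒜 = ∅)))) :=
  stmt8_general n r 𝒜 ℬ h𝒜 hℬ hcross
end

section
/- For every r ≥ 1 and n ≥ 2, if (A, B) is a cross-intersecting pair of families of independent sets of size r in the cycle C_n, then |A| + |B| ≤ |J^r(C_n)|. -/
open Finset SimpleGraph

namespace IndepFinset

variable {V : Type*} {G : SimpleGraph V} {A : Finset V}

theorem map_iso (hA : IndepFinset G A) (φ : G ≃g G) :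
    IndepFinset G (A.map φ.toEquiv.toEmbedding) := by
  simp only [IndepFinset, mem_map]
  rintro _ ⟨u, hu, rfl⟩ _ ⟨v, hv, rfl⟩
  simpa [φ.map_adj_iff] using hA u hu v hv

theorem disjoint_map_of_forall_adj (hA : IndepFinset G A) (φ : V ↪ V)
    (hφ : ∀ v, G.Adj v (φ v)) : Disjoint A (A.map φ) := by
  rw [Finset.disjoint_left]
  rintro u hu hu'
  obtain ⟨v, hv, rfl⟩ := mem_map.1 hu'
  exact hA v hv _ hu (hφ v)

theorem card_add_card_le_of_crossIntersecting [Finite V] [DecidableEq V] (φ : G ≃g G)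
    (hφ : ∀ v, G.Adj v (φ v)) {r : ℕ} {𝒜 ℬ : Finset (Finset V)}
    (h𝒜 : ∀ A ∈ 𝒜, IndepFinset G A ∧ #A = r) (hℬ : ∀ B ∈ ℬ, IndepFinset G B ∧ #B = r)
    (hcross : ∀ A ∈ 𝒜, ∀ B ∈ ℬ, (A ∩ B).Nonempty) :
    #𝒜 + #ℬ ≤ {A : Finset V | IndepFinset G A ∧ #A = r}.ncard := by
  classical
  have := Fintype.ofFinite V
  let J : Finset (Finset V) := {A | IndepFinset G A ∧ #A = r}
  have hJ : {A : Finset V | IndepFinset G A ∧ #A = r}.ncard = #J := by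
    rw [← Set.ncard_coe_finset]
    congr
    ext
    simp [J]
  have hℬJ : ℬ ⊆ J := fun B hB => by simpa [J] using hℬ B hB
  have h𝒜J : #𝒜 ≤ #(J \ ℬ) := by
    refine card_le_card_of_injOn (·.map φ.toEquiv.toEmbedding) (fun A hA => ?_)
      (Finset.map_injective _).injOn
    obtain ⟨hAi, hAr⟩ := h𝒜 A hA
    refine mem_sdiff.2 ⟨by simpa [J, hAr] using hAi.map_iso φ, fun hB => ?_⟩
    exact not_disjoint_iff_nonempty_inter.2 (hcross A hA _ hB)
      (hAi.disjoint_map_of_forall_adj φ.toEquiv.toEmbedding hφ)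
  calc #𝒜 + #ℬ ≤ #(J \ ℬ) + #ℬ := by gcongr
    _ = #J := card_sdiff_add_card_eq_card hℬJ
    _ = _ := hJ.symm

end IndepFinset

namespace SimpleGraph.cycleGraph

def rotation (n : ℕ) : cycleGraph (n + 2) ≃g cycleGraph (n + 2) where
  toEquiv := Equiv.addRight 1
  map_rel_iff' := by simp [cycleGraph_adj]

theorem adj_rotation (n : ℕ) (v : Fin (n + 2)) : (cycleGraph (n + 2)).Adj v (rotation n v) := by
  simp [rotation, cycleGraph_adj]

end SimpleGraph.cycleGraph

theorem stmt10_general (n r : ℕ) (hn : 2 ≤ n)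
    (𝒜 ℬ : Finset (Finset (Fin n)))
    (h𝒜 : ∀ A ∈ 𝒜, IndepFinset (SimpleGraph.cycleGraph n) A ∧ A.card = r)
    (hℬ : ∀ B ∈ ℬ, IndepFinset (SimpleGraph.cycleGraph n) B ∧ B.card = r)
    (hcross : ∀ A ∈ 𝒜, ∀ B ∈ ℬ, (A ∩ B).Nonempty) :
    𝒜.card + ℬ.card ≤
      Set.ncard {A : Finset (Fin n) |
        IndepFinset (SimpleGraph.cycleGraph n) A ∧ A.card = r} := by
  obtain ⟨m, rfl⟩ : ∃ m, n = m + 2 := ⟨n - 2, by omega⟩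
  exact IndepFinset.card_add_card_le_of_crossIntersecting (cycleGraph.rotation m)
    (cycleGraph.adj_rotation m) h𝒜 hℬ hcross

theorem stmt10 (n r : ℕ) (hn : 2 ≤ n) (hr : 1 ≤ r)
    (𝒜 ℬ : Finset (Finset (Fin n)))
    (h𝒜 : ∀ A ∈ 𝒜, IndepFinset (SimpleGraph.cycleGraph n) A ∧ A.card = r)
    (hℬ : ∀ B ∈ ℬ, IndepFinset (SimpleGraph.cycleGraph n) B ∧ B.card = r)
    (hcross : ∀ A ∈ 𝒜, ∀ B ∈ ℬ, (A ∩ B).Nonempty) :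
    𝒜.card + ℬ.card ≤
      Set.ncard {A : Finset (Fin n) |
        IndepFinset (SimpleGraph.cycleGraph n) A ∧ A.card = r} :=
  stmt10_general n r hn 𝒜 ℬ h𝒜 hℬ hcross
end

section
/- Every chordal graph with at least one vertex has a simplicial vertex, i.e., a vertex whose neighborhood induces a clique. -/
/-- A graph is chordal if it contains no induced cycle on 4 or more vertices. -/
def IsChordal {V : Type*} (G : SimpleGraph V) : Prop :=
  ∀ m : ℕ, 4 ≤ m → ¬ ∃ f : Fin m ↪ V, ∀ i j : Fin m,
    G.Adj (f i) (f j) ↔ (SimpleGraph.cycleGraph m).Adj i j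

/-!
Dirac's argument. Let `u` be a vertex with a non-neighbour `w`, and let `C` be the component of
`w` in `G - N[u]`. The neighbours of `u` that see `C` form a clique `S`: for non-adjacent
`s, t ∈ S`, a shortest `s`–`t` path through `C`, closed up by `u`, would be an induced cycle of
length at least 4. By induction, `G[C ∪ S]` (which misses `u`) is complete or has two non-adjacent
simplicial vertices, which cannot both lie in the clique `S`. Either way some vertex of `C` is
simplicial in `G[C ∪ S]`, hence in `G`, since all its neighbours lie in `C ∪ S`. Running this
twice shows that a chordal graph is complete or has two non-adjacent simplicial vertices.
-/

namespace SimpleGraph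

theorem cycleGraph_adj_iff_val {n : ℕ} {i j : Fin (n + 2)} :
    (cycleGraph (n + 2)).Adj i j ↔
      (i : ℕ) + 1 = j ∨ (j : ℕ) + 1 = i ∨ ((i : ℕ) = 0 ∧ (j : ℕ) = n + 1) ∨
        ((j : ℕ) = 0 ∧ (i : ℕ) = n + 1) := by
  have hi := i.isLt
  have hj := j.isLt
  rw [cycleGraph_adj']
  rcases lt_trichotomy i j with h | rfl | h
  · rw [Fin.coe_sub_iff_lt.mpr h, Fin.coe_sub_iff_le.mpr h.le]
    omega
  · simp only [sub_self, Fin.val_zero]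
    omega
  · rw [Fin.coe_sub_iff_le.mpr h.le, Fin.coe_sub_iff_lt.mpr h]
    omega

namespace Walk

variable {V : Type*} {G : SimpleGraph V} {u v : V} {p : G.Walk u v}

theorem dist_getVert_of_length_eq_dist (hp : p.length = G.dist u v) {i : ℕ}
    (hi : i ≤ p.length) : G.dist u (p.getVert i) = i := by
  rw [← length_eq_dist_of_subwalk hp (p.isSubwalk_take i), take_length]
  omega

theorem adj_getVert_iff_of_length_eq_dist (hp : p.length = G.dist u v) {i j : ℕ}
    (hi : i ≤ p.length) (hj : j ≤ p.length) :
    G.Adj (p.getVert i) (p.getVert j) ↔ i + 1 = j ∨ j + 1 = i := by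
  constructor
  · intro hadj
    have hne : i ≠ j := by rintro rfl; exact hadj.ne rfl
    have := hadj.diff_dist_adj (u := u)
    rw [dist_getVert_of_length_eq_dist hp hi, dist_getVert_of_length_eq_dist hp hj] at this
    omega
  · rintro (rfl | rfl)
    · exact p.adj_getVert_succ (by omega)
    · exact (p.adj_getVert_succ (by omega)).symm

end Walk

variable {V : Type*} {G : SimpleGraph V}

theorem exists_connected_induce_closed_of_mem [Finite V] {A : Set V} {w : V} (hw : w ∈ A) :
    ∃ C ⊆ A, w ∈ C ∧ (G.induce C).Connected ∧ ∀ c ∈ C, ∀ x ∈ A, G.Adj c x → x ∈ C := by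
  have hw' : (G.induce {w}).Connected := by
    rw [connected_iff]; exact ⟨Preconnected.of_subsingleton, inferInstance⟩
  obtain ⟨C, hwC, ⟨hCA, hC⟩, hmax⟩ :=
    Finite.exists_le_maximal (p := fun C : Set V => C ⊆ A ∧ (G.induce C).Connected)
      (a := {w}) ⟨by simpa, hw'⟩
  refine ⟨C, hCA, hwC rfl, hC, fun c hc x hx hcx => ?_⟩
  have hext : C ∪ {x} ⊆ A ∧ (G.induce (C ∪ {x})).Connected :=
    ⟨Set.union_subset hCA (by simpa), connected_induce_union hC.preconnected
      Preconnected.of_subsingleton hc rfl hcx⟩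
  exact hmax hext Set.subset_union_left (Or.inr rfl)

theorem isClique_neighborSet_of_induce {s : Set V} {v : s} (hv : G.neighborSet v ⊆ s)
    (h : (G.induce s).IsClique ((G.induce s).neighborSet v)) :
    G.IsClique (G.neighborSet v) := by
  intro a ha b hb hab
  exact h (show (G.induce s).Adj v ⟨a, hv ha⟩ from ha)
    (show (G.induce s).Adj v ⟨b, hv hb⟩ from hb) (fun h' => hab (congrArg Subtype.val h'))

def HasTwoNonadjacentSimplicial (G : SimpleGraph V) : Prop :=
  ∃ v w, v ≠ w ∧ ¬ G.Adj v w ∧ G.IsClique (G.neighborSet v) ∧ G.IsClique (G.neighborSet w)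

end SimpleGraph

open SimpleGraph

section

variable {V : Type*} {G : SimpleGraph V}

theorem IsChordal.of_embedding {W : Type*} {H : SimpleGraph W} (hG : IsChordal G)
    (e : H ↪g G) : IsChordal H := by
  rintro m hm ⟨f, hf⟩
  exact hG m hm ⟨f.trans e.toEmbedding, fun i j => by simpa using hf i j⟩

theorem IsChordal.exists_adj_of_adj_endpoints (hG : IsChordal G) {k : ℕ} (hk : 2 ≤ k)
    {f : ℕ → V} (hinj : Set.InjOn f {i | i ≤ k})
    (hf : ∀ i ≤ k, ∀ j ≤ k, G.Adj (f i) (f j) ↔ i + 1 = j ∨ j + 1 = i)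
    {v : V} (hv : ∀ i ≤ k, f i ≠ v) (h₀ : G.Adj (f 0) v) (hₖ : G.Adj (f k) v) :
    ∃ i, 0 < i ∧ i < k ∧ G.Adj (f i) v := by
  by_contra! hnadj
  have hfv : ∀ i ≤ k, G.Adj (f i) v ↔ i = 0 ∨ i = k := fun i hi =>
    ⟨fun h => by by_contra! h'; exact hnadj i (by omega) (by omega) h,
      by rintro (rfl | rfl) <;> assumption⟩
  -- `f 0, …, f k, v` would be an induced cycle of length `k + 2 ≥ 4`.
  let g : Fin (k + 2) → V := fun i => if (i : ℕ) ≤ k then f i else v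
  refine hG (k + 2) (by omega) ⟨⟨g, fun i j hij => ?_⟩, fun i j => ?_⟩
  · simp only [g] at hij
    apply Fin.ext
    split_ifs at hij with hi hj hj
    · exact hinj hi hj hij
    · exact absurd hij (hv _ hi)
    · exact absurd hij.symm (hv _ hj)
    · omega
  · rw [cycleGraph_adj_iff_val]
    change G.Adj (g i) (g j) ↔ _
    simp only [g]
    split_ifs with hi hj hj
    · rw [hf _ hi _ hj]
      omega
    · rw [hfv _ hi]
      omega
    · rw [G.adj_comm, hfv _ hj]
      omega
    · simp only [SimpleGraph.irrefl, false_iff]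
      omega

theorem IsChordal.isClique_neighbors_of_preconnected (hG : IsChordal G) {u : V} {C : Set V}
    (hC : (G.induce C).Preconnected) (hCu : ∀ c ∈ C, c ≠ u ∧ ¬ G.Adj u c) :
    G.IsClique {x | G.Adj u x ∧ ∃ c ∈ C, G.Adj x c} := by
  rintro s ⟨hus, c, hc, hsc⟩ t ⟨hut, d, hd, htd⟩ hst
  by_contra hnst
  have hW : (G.induce ({s} ∪ C ∪ {t})).Connected :=
    connected_induce_union
      (connected_induce_union Preconnected.of_subsingleton hC (Set.mem_singleton s) hc
        hsc).preconnected
      Preconnected.of_subsingleton (Or.inr hd) (Set.mem_singleton t) htd.symm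
  have huW : u ∉ {s} ∪ C ∪ {t} := by
    rintro ((rfl | hu) | rfl)
    · exact hus.ne rfl
    · exact (hCu u hu).1 rfl
    · exact hut.ne rfl
  obtain ⟨p, hp⟩ := hW.exists_walk_length_eq_dist ⟨s, by simp⟩ ⟨t, by simp⟩
  have hpath := p.isPath_of_length_eq_dist hp
  have hk : 2 ≤ p.length :=
    hp ▸ hW.one_lt_dist_of_ne_of_not_adj (fun h => hst (congrArg Subtype.val h)) hnst
  have hint : ∀ i, 0 < i → i < p.length → (p.getVert i : V) ∈ C := by
    intro i hi hik
    rcases (p.getVert i).2 with (h | h) | h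
    · exact absurd ((hpath.getVert_eq_start_iff hik.le).mp (Subtype.ext h)) hi.ne'
    · exact h
    · exact absurd ((hpath.getVert_eq_end_iff hik.le).mp (Subtype.ext h)) hik.ne
  obtain ⟨i, hi₀, hik, hadj⟩ :=
    hG.exists_adj_of_adj_endpoints hk (f := fun i => (p.getVert i : V)) (v := u)
      (Subtype.val_injective.comp_injOn hpath.getVert_injOn)
      (fun i hi j hj => p.adj_getVert_iff_of_length_eq_dist hp hi hj)
      (fun i _ h => huW (h ▸ (p.getVert i).2))
      (by rw [Walk.getVert_zero]; exact hus.symm) (by rw [Walk.getVert_length]; exact hut.symm)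
  exact (hCu _ (hint i hi₀ hik)).2 hadj.symm

theorem IsChordal.exists_simplicial_not_adj [Finite V] (hG : IsChordal G) {u w : V}
    (hwu : w ≠ u) (huw : ¬ G.Adj u w)
    (ih : ∀ s : Set V, u ∉ s → G.induce s = ⊤ ∨ (G.induce s).HasTwoNonadjacentSimplicial) :
    ∃ v, v ≠ u ∧ ¬ G.Adj u v ∧ G.IsClique (G.neighborSet v) := by
  obtain ⟨C, hCA, hwC, hC, hclosed⟩ :=
    exists_connected_induce_closed_of_mem (G := G) (A := {x | x ≠ u ∧ ¬ G.Adj u x}) ⟨hwu, huw⟩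
  set S := {x | G.Adj u x ∧ ∃ c ∈ C, G.Adj x c}
  have hS : G.IsClique S := hG.isClique_neighbors_of_preconnected hC.preconnected hCA
  have hnbr : ∀ c ∈ C, G.neighborSet c ⊆ C ∪ S := by
    intro c hc x hcx
    by_cases hx : x ≠ u ∧ ¬ G.Adj u x
    · exact Or.inl (hclosed c hc x hx hcx)
    · refine Or.inr ⟨?_, c, hc, hcx.symm⟩
      rw [not_and_or, not_not, not_not] at hx
      rcases hx with rfl | hx
      · exact absurd hcx.symm (hCA hc).2
      · exact hx
  have hsimplicial : ∀ v : ↥(C ∪ S), (v : V) ∈ C →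
      (G.induce (C ∪ S)).IsClique ((G.induce (C ∪ S)).neighborSet v) →
      ∃ v, v ≠ u ∧ ¬ G.Adj u v ∧ G.IsClique (G.neighborSet v) :=
    fun v hv h => ⟨v, (hCA hv).1, (hCA hv).2, isClique_neighborSet_of_induce (hnbr v hv) h⟩
  have huCS : u ∉ C ∪ S := by
    rintro (h | h)
    · exact (hCA h).1 rfl
    · exact h.1.ne rfl
  rcases ih (C ∪ S) huCS with htop | ⟨v₁, v₂, hne, hnadj, h₁, h₂⟩
  · exact hsimplicial ⟨w, Or.inl hwC⟩ hwC (htop ▸ IsClique.top _)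
  · by_cases hv₁ : (v₁ : V) ∈ C
    · exact hsimplicial v₁ hv₁ h₁
    by_cases hv₂ : (v₂ : V) ∈ C
    · exact hsimplicial v₂ hv₂ h₂
    exact absurd (hS (v₁.2.resolve_left hv₁) (v₂.2.resolve_left hv₂)
      (fun h => hne (Subtype.ext h))) hnadj

theorem IsChordal.eq_top_or_hasTwoNonadjacentSimplicial [Finite V] (hG : IsChordal G) :
    G = ⊤ ∨ G.HasTwoNonadjacentSimplicial := by
  induction hn : Nat.card V using Nat.strong_induction_on generalizing V with
  | _ n ih =>
  by_cases htop : G = ⊤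
  · exact Or.inl htop
  have ih' (x : V) (s : Set V) (hx : x ∉ s) :
      G.induce s = ⊤ ∨ (G.induce s).HasTwoNonadjacentSimplicial :=
    ih _ (hn ▸ Finite.card_subtype_lt hx) (hG.of_embedding (Embedding.induce s)) rfl
  obtain ⟨u, w, hwu, huw⟩ : ∃ u w, w ≠ u ∧ ¬ G.Adj u w := by
    by_contra! hall
    exact htop (eq_top_iff_forall_ne_adj.mpr fun a b hab => hall a b hab.symm)
  obtain ⟨v₁, hv₁u, huv₁, hv₁⟩ := hG.exists_simplicial_not_adj hwu huw (ih' u)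
  obtain ⟨v₂, hv₂v₁, hv₁v₂, hv₂⟩ :=
    hG.exists_simplicial_not_adj hv₁u.symm (fun h => huv₁ h.symm) (ih' v₁)
  exact Or.inr ⟨v₁, v₂, hv₂v₁.symm, hv₁v₂, hv₁, hv₂⟩

theorem IsChordal.exists_isClique_neighborSet [Finite V] [Nonempty V] (hG : IsChordal G) :
    ∃ v, G.IsClique (G.neighborSet v) := by
  rcases hG.eq_top_or_hasTwoNonadjacentSimplicial with rfl | ⟨v, -, -, -, hv, -⟩
  · exact ⟨Classical.arbitrary V, IsClique.top _⟩
  · exact ⟨v, hv⟩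

end

theorem stmt13 {V : Type*} [Fintype V] [Nonempty V] (G : SimpleGraph V)
    (hG : IsChordal G) :
    ∃ v : V, ∀ a b : V, G.Adj v a → G.Adj v b → a ≠ b → G.Adj a b := by
  obtain ⟨v, hv⟩ := hG.exists_isClique_neighborSet
  exact ⟨v, fun a b ha hb hab => hv ha hb hab⟩
end

section
/- Let G be a graph with vertices v1, v2 where N[v1] ⊆ N[v2], and let (A, B) be a cross-intersecting pair of independent r-sets of G. With the compressions f, g as above, let Ā = { A ∈ f(A) : v2 ∉ A } and B̄ = { B ∈ g(B) : v2 ∉ B }. Then (Ā, B̄) is a cross-intersecting pair of independent r-sets in G - v2. -/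
/-- The closed neighborhood `N[v]`. -/
def closedNbhd {V : Type*} (G : SimpleGraph V) (v : V) : Set V :=
  {u | u = v ∨ G.Adj u v}

/-- The compression replacing `v2` by `v1` in `A`, provided `v2 ∈ A` and the
resulting set is not already in the family `𝒜`. -/
def compress {V : Type*} [DecidableEq V] (v1 v2 : V)
    (𝒜 : Finset (Finset V)) (A : Finset V) : Finset V :=
  if v2 ∈ A ∧ insert v1 (A.erase v2) ∉ 𝒜 then insert v1 (A.erase v2) else A

open Finset

namespace IndepFinset

variable {V : Type*} [DecidableEq V] {G : SimpleGraph V} {v1 v2 : V} {A : Finset V}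

theorem not_adj_of_mem_erase (h : closedNbhd G v1 ⊆ closedNbhd G v2) (hA : IndepFinset G A)
    (hv2 : v2 ∈ A) {u : V} (hu : u ∈ A.erase v2) : ¬G.Adj u v1 := fun hadj =>
  (h (Or.inr hadj)).elim (ne_of_mem_erase hu) (hA u (mem_of_mem_erase hu) v2 hv2)

theorem notMem_erase (h : closedNbhd G v1 ⊆ closedNbhd G v2) (hA : IndepFinset G A)
    (hv2 : v2 ∈ A) : v1 ∉ A.erase v2 := fun hv1 =>
  (h (Or.inl rfl)).elim (ne_of_mem_erase hv1) (hA v1 (mem_of_mem_erase hv1) v2 hv2)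

theorem insert_erase (h : closedNbhd G v1 ⊆ closedNbhd G v2) (hA : IndepFinset G A)
    (hv2 : v2 ∈ A) : IndepFinset G (insert v1 (A.erase v2)) := by
  intro u hu v hv
  rw [mem_insert] at hu hv
  rcases hu with rfl | hu <;> rcases hv with rfl | hv
  · exact G.irrefl
  · exact fun hadj => hA.not_adj_of_mem_erase h hv2 hv hadj.symm
  · exact hA.not_adj_of_mem_erase h hv2 hu
  · exact hA u (mem_of_mem_erase hu) v (mem_of_mem_erase hv)

theorem card_insert_erase (h : closedNbhd G v1 ⊆ closedNbhd G v2) (hA : IndepFinset G A)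
    (hv2 : v2 ∈ A) : (insert v1 (A.erase v2)).card = A.card := by
  rw [card_insert_of_notMem (hA.notMem_erase h hv2), card_erase_add_one hv2]

end IndepFinset

section Compress

variable {V : Type*} [DecidableEq V] {G : SimpleGraph V} {v1 v2 : V} {𝒜 ℬ : Finset (Finset V)}
  {A B : Finset V}

theorem indepFinset_compress (h : closedNbhd G v1 ⊆ closedNbhd G v2) (hA : IndepFinset G A) :
    IndepFinset G (compress v1 v2 𝒜 A) := by
  unfold compress
  split_ifs with hc
  · exact hA.insert_erase h hc.1
  · exact hA

theorem card_compress (h : closedNbhd G v1 ⊆ closedNbhd G v2) (hA : IndepFinset G A) :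
    (compress v1 v2 𝒜 A).card = A.card := by
  unfold compress
  split_ifs with hc
  · exact hA.card_insert_erase h hc.1
  · rfl

theorem mem_compress_of_ne {x : V} (hx : x ∈ A) (hxv2 : x ≠ v2) : x ∈ compress v1 v2 𝒜 A := by
  unfold compress
  split_ifs
  · exact mem_insert_of_mem (mem_erase.2 ⟨hxv2, hx⟩)
  · exact hx

theorem mem_compress_of_mem_of_notMem (hv2 : v2 ∈ A) (hv2' : v2 ∉ compress v1 v2 𝒜 A) :
    v1 ∈ compress v1 v2 𝒜 A := by
  unfold compress at hv2' ⊢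
  split_ifs at hv2' ⊢
  · exact mem_insert_self _ _
  · exact absurd hv2 hv2'

theorem compress_inter_nonempty (hA : v2 ∉ compress v1 v2 𝒜 A) (hB : v2 ∉ compress v1 v2 ℬ B)
    (hAB : (A ∩ B).Nonempty) : (compress v1 v2 𝒜 A ∩ compress v1 v2 ℬ B).Nonempty := by
  obtain ⟨x, hx⟩ := hAB
  rw [mem_inter] at hx
  by_cases hxv2 : x = v2
  · subst hxv2
    exact ⟨v1, mem_inter.2 ⟨mem_compress_of_mem_of_notMem hx.1 hA,
      mem_compress_of_mem_of_notMem hx.2 hB⟩⟩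
  · exact ⟨x, mem_inter.2 ⟨mem_compress_of_ne hx.1 hxv2, mem_compress_of_ne hx.2 hxv2⟩⟩

theorem compress_family_indep (h : closedNbhd G v1 ⊆ closedNbhd G v2)
    {r : ℕ} (h𝒜 : ∀ A ∈ 𝒜, IndepFinset G A ∧ A.card = r) :
    ∀ S ∈ (𝒜.image (compress v1 v2 𝒜)).filter (fun A => v2 ∉ A),
      ↑S ⊆ {u : V | u ≠ v2} ∧ IndepFinset G S ∧ S.card = r := by
  simp only [mem_filter, mem_image]
  rintro _ ⟨⟨A, hA, rfl⟩, hv2⟩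
  exact ⟨fun u hu hu2 => hv2 (hu2 ▸ hu), indepFinset_compress h (h𝒜 A hA).1,
    (card_compress h (h𝒜 A hA).1).trans (h𝒜 A hA).2⟩

end Compress

theorem stmt15 {V : Type*} [DecidableEq V] (G : SimpleGraph V) (v1 v2 : V)
    (h : closedNbhd G v1 ⊆ closedNbhd G v2) (r : ℕ)
    (𝒜 ℬ : Finset (Finset V))
    (h𝒜 : ∀ A ∈ 𝒜, IndepFinset G A ∧ A.card = r)
    (hℬ : ∀ B ∈ ℬ, IndepFinset G B ∧ B.card = r)
    (hcross : ∀ A ∈ 𝒜, ∀ B ∈ ℬ, (A ∩ B).Nonempty) :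
    (∀ S ∈ (𝒜.image (compress v1 v2 𝒜)).filter (fun A => v2 ∉ A),
      ↑S ⊆ {u : V | u ≠ v2} ∧ IndepFinset G S ∧ S.card = r) ∧
    (∀ T ∈ (ℬ.image (compress v1 v2 ℬ)).filter (fun B => v2 ∉ B),
      ↑T ⊆ {u : V | u ≠ v2} ∧ IndepFinset G T ∧ T.card = r) ∧
    ∀ S ∈ (𝒜.image (compress v1 v2 𝒜)).filter (fun A => v2 ∉ A),
      ∀ T ∈ (ℬ.image (compress v1 v2 ℬ)).filter (fun B => v2 ∉ B),
        (S ∩ T).Nonempty := by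
  refine ⟨compress_family_indep h h𝒜, compress_family_indep h hℬ, ?_⟩
  simp only [mem_filter, mem_image]
  rintro _ ⟨⟨A, hA, rfl⟩, hvA⟩ _ ⟨⟨B, hB, rfl⟩, hvB⟩
  exact compress_inter_nonempty hvA hvB (hcross A hA B hB)
end

section
/- If G is the edgeless graph on n vertices and r ≤ n/2, then for any cross-intersecting pair (A, B) of families of r-subsets of the vertex set, |A| + |B| ≤ C(n, r). -/
/-! Complementing `𝒜` gives a family of `(n - r)`-sets, and its `(n - 2r)`-th iterated shadow `𝒞`
is a family of `r`-sets. Every member of `𝒞` lies inside the complement of some `A ∈ 𝒜`, so it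
misses `A` and hence is not in `ℬ`. Iterating the local LYM inequality shows that `𝒞` has density
among the `r`-sets at least that of `𝒜ᶜˢ` among the `(n - r)`-sets, i.e. `#𝒜 ≤ #𝒞`. So `𝒞` and `ℬ`
are disjoint families of `r`-sets and `#𝒜 + #ℬ ≤ #𝒞 + #ℬ ≤ C(n, r)`. -/

open FinsetFamily

namespace Finset

variable {α : Type*} [DecidableEq α] [Fintype α]

theorem card_div_choose_le_card_shadow_iterate_div_choose {𝕜 : Type*} [Semifield 𝕜]
    [LinearOrder 𝕜] [IsStrictOrderedRing 𝕜] {𝒜 : Finset (Finset α)} {r k : ℕ} (hk : k ≤ r)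
    (h𝒜 : (𝒜 : Set (Finset α)).Sized r) :
    (#𝒜 : 𝕜) / (Fintype.card α).choose r
      ≤ #(∂^[k] 𝒜) / (Fintype.card α).choose (r - k) := by
  induction k generalizing r 𝒜 with
  | zero => simp
  | succ k ih =>
    calc (#𝒜 : 𝕜) / (Fintype.card α).choose r
        ≤ #(∂ 𝒜) / (Fintype.card α).choose (r - 1) :=
          card_div_choose_le_card_shadow_div_choose (by omega) h𝒜
      _ ≤ #(∂^[k] (∂ 𝒜)) / (Fintype.card α).choose (r - 1 - k) := ih (by omega) h𝒜.shadow
      _ = #(∂^[k + 1] 𝒜) / (Fintype.card α).choose (r - (k + 1)) := by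
          rw [Function.iterate_succ_apply, Nat.sub_sub, Nat.add_comm 1 k]

theorem card_le_card_shadow_iterate_compls {𝒜 : Finset (Finset α)} {r : ℕ}
    (h𝒜 : (𝒜 : Set (Finset α)).Sized r) (hr : 2 * r ≤ Fintype.card α) :
    #𝒜 ≤ #(∂^[Fintype.card α - 2 * r] 𝒜ᶜˢ) := by
  have hdensity := card_div_choose_le_card_shadow_iterate_div_choose (𝕜 := ℚ)
    (k := Fintype.card α - 2 * r) (by omega) h𝒜.compls
  rw [card_compls, show Fintype.card α - r - (Fintype.card α - 2 * r) = r by omega,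
    Nat.choose_symm (by omega)] at hdensity
  have hchoose : (0 : ℚ) < (Fintype.card α).choose r := by
    exact_mod_cast Nat.choose_pos (by omega)
  exact_mod_cast (div_le_div_iff_of_pos_right hchoose).mp hdensity

theorem disjoint_shadow_iterate_compls_of_cross_intersecting {𝒜 ℬ : Finset (Finset α)}
    (hcross : ∀ A ∈ 𝒜, ∀ B ∈ ℬ, (A ∩ B).Nonempty) (k : ℕ) :
    Disjoint ℬ (∂^[k] 𝒜ᶜˢ) := by
  refine disjoint_right.2 fun B hB𝒞 hBℬ => ?_
  obtain ⟨C, hC, hBC, -⟩ := mem_shadow_iterate_iff_exists_sdiff.1 hB𝒞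
  obtain ⟨x, hx⟩ := hcross _ (mem_compls.1 hC) B hBℬ
  exact mem_compl.1 (mem_inter.1 hx).1 (hBC (mem_inter.1 hx).2)

theorem card_add_card_le_choose_of_cross_intersecting {𝒜 ℬ : Finset (Finset α)} {r : ℕ}
    (hr : 2 * r ≤ Fintype.card α) (h𝒜 : (𝒜 : Set (Finset α)).Sized r)
    (hℬ : (ℬ : Set (Finset α)).Sized r) (hcross : ∀ A ∈ 𝒜, ∀ B ∈ ℬ, (A ∩ B).Nonempty) :
    #𝒜 + #ℬ ≤ (Fintype.card α).choose r := by
  set 𝒞 := ∂^[Fintype.card α - 2 * r] 𝒜ᶜˢ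
  have h𝒞 : (𝒞 : Set (Finset α)).Sized r := by
    convert h𝒜.compls.shadow_iterate using 2
    omega
  calc #𝒜 + #ℬ ≤ #𝒞 + #ℬ := Nat.add_le_add_right (card_le_card_shadow_iterate_compls h𝒜 hr) _
    _ = #(𝒞 ∪ ℬ) := (card_union_of_disjoint
        (disjoint_shadow_iterate_compls_of_cross_intersecting hcross _).symm).symm
    _ ≤ (Fintype.card α).choose r :=
        Set.Sized.card_le (by rw [coe_union, Set.sized_union]; exact ⟨h𝒞, hℬ⟩)

end Finset

theorem stmt16 (n r : ℕ) (hr : 2 * r ≤ n)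
    (𝒜 ℬ : Finset (Finset (Fin n)))
    (h𝒜 : ∀ A ∈ 𝒜, A.card = r) (hℬ : ∀ B ∈ ℬ, B.card = r)
    (hcross : ∀ A ∈ 𝒜, ∀ B ∈ ℬ, (A ∩ B).Nonempty) :
    𝒜.card + ℬ.card ≤ n.choose r := by
  simpa using Finset.card_add_card_le_choose_of_cross_intersecting (α := Fin n)
    (by simpa using hr) h𝒜 hℬ hcross
end

section
/- Let r ≤ n/2 and k ≥ 2, and let A_1, …, A_k be cross-intersecting families of r-subsets of [n] with A_1 nonempty. If k ≤ n/r then Σ|A_i| ≤ C(n, r), and if k ≥ n/r then Σ|A_i| ≤ k · C(n-1, r-1). -/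
/-!
Katona's cycle method. Place the ground set on a cycle `ZMod n` by a bijection `σ`; an arc is
a set of `r` consecutive points. The members of the families that are arcs of `σ` form
cross-intersecting families of arcs, and on a cycle of length `n ≥ 2r` there are at most
`max n (k * r)` of them: two nonempty cross-intersecting families of arcs have at most `2r`
members together (shifting one of them by `r` puts all differences strictly between `0` and
`2r`), so the total is at most `k * r` unless a single family is nonempty, and then it is at
most `n`. Averaging over all `σ`, each `r`-set is an arc equally often, which gives
`n * ∑ |𝒜 i| ≤ max n (k * r) * C(n, r)`; both bounds follow, as `r * C(n, r) = n * C(n-1, r-1)`.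
-/

open Finset Fintype
open scoped Nat

namespace Katona

lemma sum_le_mul_of_add_le {ι : Type*} [Fintype ι] {c : ℕ} (hι : 2 ≤ card ι) (a : ι → ℕ)
    (h : ∀ i j, i ≠ j → a i + a j ≤ 2 * c) : ∑ i, a i ≤ card ι * c := by
  -- pair every index with its image under a fixed-point-free permutation
  let σ : Equiv.Perm ι := (equivFin ι).symm.permCongr (finRotate (card ι))
  have hσ (i : ι) : σ i ≠ i := by
    have hrot := Equiv.Perm.mem_support.1 (support_finRotate_of_le hι ▸ mem_univ (equivFin ι i))
    simpa [σ, Equiv.permCongr_apply, Equiv.symm_apply_eq] using hrot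
  have : 2 * ∑ i, a i ≤ card ι * (2 * c) :=
    calc 2 * ∑ i, a i = ∑ i, (a i + a (σ i)) := by rw [sum_add_distrib, Equiv.sum_comp]; ring
      _ ≤ ∑ _i : ι, 2 * c := sum_le_sum fun i _ => h i (σ i) (hσ i).symm
      _ = card ι * (2 * c) := by rw [sum_const, card_univ, smul_eq_mul]
  rw [mul_left_comm] at this
  omega

section Circle

variable {n r : ℕ}

def arc (r : ℕ) (t : ZMod n) : Finset (ZMod n) := (range r).image fun j : ℕ => t + j

lemma card_arc (hr : r ≤ n) (t : ZMod n) : #(arc r t) = r := by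
  rw [arc, card_image_of_injOn, card_range]
  intro i hi j hj hij
  simp only [coe_range, Set.mem_Iio] at hi hj
  have := congrArg ZMod.val (add_left_cancel hij)
  rwa [ZMod.val_cast_of_lt (by omega), ZMod.val_cast_of_lt (by omega)] at this

lemma val_add_sub_lt_of_arc_inter (hr : 2 * r ≤ n) {a b : ZMod n}
    (h : (arc r a ∩ arc r b).Nonempty) : 0 < (b + r - a).val ∧ (b + r - a).val < 2 * r := by
  obtain ⟨x, hx⟩ := h
  simp only [arc, mem_inter, mem_image, mem_range] at hx
  obtain ⟨⟨i, hi, rfl⟩, j, hj, hij⟩ := hx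
  have hdiff : b + r - a = ((r + i - j : ℕ) : ZMod n) := by
    push_cast [Nat.cast_sub (show j ≤ r + i by omega)]
    linear_combination hij
  rw [hdiff, ZMod.val_cast_of_lt (by omega)]
  omega

variable [NeZero n]

-- All of `A ∪ C` lies between the two ends of a pair `(a₀, c₀)` of maximal difference.
lemma card_add_card_le_of_sub_val_lt {m : ℕ} {A C : Finset (ZMod n)} (hA : A.Nonempty)
    (hC : C.Nonempty) (h : ∀ a ∈ A, ∀ c ∈ C, 0 < (c - a).val ∧ (c - a).val < m) :
    #A + #C ≤ m := by
  obtain ⟨⟨a₀, c₀⟩, hp, hmax⟩ :=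
    exists_max_image (A ×ˢ C) (fun p => (p.2 - p.1).val) (hA.product hC)
  obtain ⟨ha₀, hc₀⟩ := mem_product.1 hp
  have hdisj : Disjoint A C :=
    disjoint_left.2 fun x hxA hxC => by simpa using (h x hxA x hxC).1
  have hoffset : ∀ x ∈ A ∪ C, (x - a₀).val ≤ (c₀ - a₀).val := by
    intro x hx
    rcases mem_union.1 hx with hxA | hxC
    · have hle : (c₀ - x).val ≤ (c₀ - a₀).val := hmax (x, c₀) (mem_product.2 ⟨hxA, hc₀⟩)
      rw [show x - a₀ = (c₀ - a₀) - (c₀ - x) by ring, ZMod.val_sub hle]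
      omega
    · exact hmax (a₀, x) (mem_product.2 ⟨ha₀, hxC⟩)
  have hsub : A ∪ C ⊆ (range ((c₀ - a₀).val + 1)).image fun j : ℕ => a₀ + j := fun x hx =>
    mem_image.2 ⟨(x - a₀).val, mem_range.2 (Nat.lt_succ_of_le (hoffset x hx)), by simp⟩
  calc #A + #C = #(A ∪ C) := (card_union_of_disjoint hdisj).symm
    _ ≤ (c₀ - a₀).val + 1 := (card_le_card hsub).trans (card_image_le.trans (card_range _).le)
    _ ≤ m := (h a₀ ha₀ c₀ hc₀).2

lemma card_add_card_le_of_arc_inter (hr : 2 * r ≤ n) {A B : Finset (ZMod n)} (hA : A.Nonempty)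
    (hB : B.Nonempty) (h : ∀ a ∈ A, ∀ b ∈ B, (arc r a ∩ arc r b).Nonempty) :
    #A + #B ≤ 2 * r := by
  have := card_add_card_le_of_sub_val_lt hA (hB.map (f := addRightEmbedding (r : ZMod n)))
    fun a ha c hc => by
      obtain ⟨b, hb, rfl⟩ := mem_map.1 hc
      exact val_add_sub_lt_of_arc_inter hr (h a ha b hb)
  rwa [card_map] at this

lemma sum_card_le_of_arc_inter {ι : Type*} [Fintype ι] (hι : 2 ≤ card ι) (hr : 2 * r ≤ n)
    (S : ι → Finset (ZMod n))
    (h : ∀ i j, i ≠ j → ∀ a ∈ S i, ∀ b ∈ S j, (arc r a ∩ arc r b).Nonempty) :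
    ∑ i, #(S i) ≤ max n (card ι * r) := by
  by_cases hsingle : ∃ i₀, ∀ j, j ≠ i₀ → S j = ∅
  · obtain ⟨i₀, hi₀⟩ := hsingle
    rw [sum_eq_single i₀ (fun j _ hj => by simp [hi₀ j hj]) (by simp)]
    exact le_max_of_le_left ((card_le_univ _).trans (ZMod.card n).le)
  push Not at hsingle
  have hle : ∀ i, #(S i) ≤ 2 * r := by
    intro i
    rcases (S i).eq_empty_or_nonempty with hi | hi
    · simp [hi]
    obtain ⟨j, hji, hj⟩ := hsingle i
    have := card_add_card_le_of_arc_inter hr hi hj (h i j hji.symm)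
    have := hj.card_pos
    omega
  refine le_max_of_le_right (sum_le_mul_of_add_le hι _ fun i j hij => ?_)
  rcases (S i).eq_empty_or_nonempty with hi | hi
  · simpa [hi] using hle j
  rcases (S j).eq_empty_or_nonempty with hj | hj
  · simpa [hj] using hle i
  exact card_add_card_le_of_arc_inter hr hi hj (h i j hij)

end Circle

section Counting

variable {α β : Type*} [Fintype α] [Fintype β] [DecidableEq α] [DecidableEq β]

lemma card_filter_map_eq_of_card_eq (P : Finset α) {A B : Finset β} (h : #A = #B) :
    #{σ : α ≃ β | P.map σ.toEmbedding = A} = #{σ : α ≃ β | P.map σ.toEmbedding = B} := by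
  obtain ⟨π, hπ⟩ := Equiv.Perm.exists_map_finset_eq A B h
  refine card_nbij' (fun σ => σ.trans π) (fun τ => τ.trans π.symm) ?_ ?_ ?_ ?_
  · intro σ hσ
    simp only [mem_coe, mem_filter, mem_univ, true_and] at hσ ⊢
    rw [Equiv.trans_toEmbedding, ← map_map, hσ, hπ]
  · intro τ hτ
    simp only [mem_coe, mem_filter, mem_univ, true_and] at hτ ⊢
    rw [Equiv.trans_toEmbedding, ← map_map, hτ, ← hπ, map_map]
    simp
  · intro σ _; simp [Equiv.trans_assoc]
  · intro τ _; simp [Equiv.trans_assoc]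

lemma card_filter_map_eq_mul_choose (P : Finset α) {A : Finset β} (hA : #A = #P) :
    #{σ : α ≃ β | P.map σ.toEmbedding = A} * (card β).choose #P = card (α ≃ β) := by
  have hfib := card_eq_sum_card_fiberwise (s := univ) (t := powersetCard #P (univ : Finset β))
    (f := fun σ : α ≃ β => P.map σ.toEmbedding) fun σ _ => by simp [mem_powersetCard]
  rw [card_univ] at hfib
  rw [hfib, sum_congr rfl fun B hB =>
      card_filter_map_eq_of_card_eq P ((mem_powersetCard.1 hB).2.trans hA.symm),
    sum_const, card_powersetCard, card_univ, smul_eq_mul, mul_comm]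

lemma card_equiv_eq_factorial {n : ℕ} [NeZero n] (hβ : card β = n) :
    card (ZMod n ≃ β) = n ! := by
  rw [Fintype.card_equiv (Fintype.equivOfCardEq (by rw [ZMod.card, hβ])), ZMod.card]

end Counting

lemma sum_card_filter_arc_map_mem_mul_choose {α : Type*} [Fintype α] [DecidableEq α] {n r : ℕ}
    [NeZero n] (hα : card α = n) (hr : r ≤ n) (𝒜 : Finset (Finset α)) (h𝒜 : ∀ A ∈ 𝒜, #A = r) :
    (∑ σ : ZMod n ≃ α, #{t : ZMod n | (arc r t).map σ.toEmbedding ∈ 𝒜}) * n.choose r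
      = n * #𝒜 * n ! := by
  have hfiber (t : ZMod n) :
      #{σ : ZMod n ≃ α | (arc r t).map σ.toEmbedding ∈ 𝒜} * n.choose r = #𝒜 * n ! := by
    rw [← sum_card_fiberwise_eq_card_filter, sum_mul, sum_const_nat fun A hA => ?_]
    have := card_filter_map_eq_mul_choose (arc r t) (by rw [h𝒜 A hA, card_arc hr] : #A = _)
    rwa [card_arc hr, hα, card_equiv_eq_factorial hα] at this
  calc (∑ σ : ZMod n ≃ α, #{t : ZMod n | (arc r t).map σ.toEmbedding ∈ 𝒜}) * n.choose r
      = ∑ t : ZMod n, #{σ : ZMod n ≃ α | (arc r t).map σ.toEmbedding ∈ 𝒜} * n.choose r := by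
        rw [← sum_mul]
        congr 1
        exact sum_card_bipartiteAbove_eq_sum_card_bipartiteBelow _
    _ = n * #𝒜 * n ! := by
        rw [sum_congr rfl fun t _ => hfiber t, sum_const, card_univ, ZMod.card, smul_eq_mul,
          mul_assoc]

theorem card_mul_sum_card_le {α ι : Type*} [Fintype α] [DecidableEq α] [Fintype ι] {n r : ℕ}
    [NeZero n] (hα : card α = n) (hι : 2 ≤ card ι) (hr : 2 * r ≤ n)
    (𝒜 : ι → Finset (Finset α)) (hcard : ∀ i, ∀ A ∈ 𝒜 i, #A = r)
    (hcross : ∀ i j, i ≠ j → ∀ A ∈ 𝒜 i, ∀ B ∈ 𝒜 j, (A ∩ B).Nonempty) :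
    n * ∑ i, #(𝒜 i) ≤ max n (card ι * r) * n.choose r := by
  set S := fun (σ : ZMod n ≃ α) i => ({t | (arc r t).map σ.toEmbedding ∈ 𝒜 i} : Finset (ZMod n))
  have hcircle (σ : ZMod n ≃ α) : ∑ i, #(S σ i) ≤ max n (card ι * r) :=
    sum_card_le_of_arc_inter hι hr _ fun i j hij a ha b hb => by
      simpa [S, ← map_inter] using hcross i j hij _ (mem_filter.1 ha).2 _ (mem_filter.1 hb).2
  refine Nat.le_of_mul_le_mul_right ?_ (Nat.factorial_pos n)
  calc (n * ∑ i, #(𝒜 i)) * n ! = ∑ i, (∑ σ, #(S σ i)) * n.choose r := by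
        rw [mul_sum, sum_mul]
        exact sum_congr rfl fun i _ =>
          (sum_card_filter_arc_map_mem_mul_choose hα (by omega) _ (hcard i)).symm
    _ = (∑ σ, ∑ i, #(S σ i)) * n.choose r := by rw [sum_comm, sum_mul]
    _ ≤ (∑ _σ : ZMod n ≃ α, max n (card ι * r)) * n.choose r := by gcongr with σ; exact hcircle σ
    _ = max n (card ι * r) * n.choose r * n ! := by
        rw [sum_const, card_univ, card_equiv_eq_factorial hα, smul_eq_mul]; ring

lemma sum_card_le_one_of_forall_card_eq_zero {α ι : Type*} [DecidableEq α] [Fintype ι]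
    (𝒜 : ι → Finset (Finset α)) (hcard : ∀ i, ∀ A ∈ 𝒜 i, #A = 0)
    (hcross : ∀ i j, i ≠ j → ∀ A ∈ 𝒜 i, ∀ B ∈ 𝒜 j, (A ∩ B).Nonempty) :
    ∑ i, #(𝒜 i) ≤ 1 := by
  rw [← Finset.card_sigma]
  refine card_le_one.2 fun ⟨i, A⟩ hA ⟨j, B⟩ hB => ?_
  simp only [mem_sigma, mem_univ, true_and] at hA hB
  obtain rfl : i = j := by
    by_contra hij
    simpa [card_eq_zero.1 (hcard i A hA)] using hcross i j hij A hA B hB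
  rw [card_eq_zero.1 (hcard i A hA), card_eq_zero.1 (hcard i B hB)]

end Katona

theorem stmt17 (n r k : ℕ) (hr : 2 * r ≤ n) (hk : 2 ≤ k)
    (𝒜 : Fin k → Finset (Finset (Fin n)))
    (hcard : ∀ i, ∀ A ∈ 𝒜 i, A.card = r)
    (hcross : ∀ i j, i ≠ j → ∀ A ∈ 𝒜 i, ∀ B ∈ 𝒜 j, (A ∩ B).Nonempty) :
    (k * r ≤ n → ∑ i, (𝒜 i).card ≤ n.choose r) ∧
      (n ≤ k * r → ∑ i, (𝒜 i).card ≤ k * (n - 1).choose (r - 1)) := by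
  -- for `r = 0` the ground set may be empty, and there is no cycle to place it on
  rcases Nat.eq_zero_or_pos r with rfl | hr₀
  · have hsum := Katona.sum_card_le_one_of_forall_card_eq_zero 𝒜 hcard hcross
    refine ⟨fun _ => by simpa using hsum, fun _ => hsum.trans ?_⟩
    simp only [Nat.zero_sub, Nat.choose_zero_right, mul_one]
    omega
  have : NeZero n := ⟨by omega⟩
  have hn : 0 < n := by omega
  have key :=
    Katona.card_mul_sum_card_le (Fintype.card_fin n) (by simpa using hk) hr 𝒜 hcard hcross
  rw [Fintype.card_fin] at key
  refine ⟨fun hkr => ?_, fun hnk => Nat.le_of_mul_le_mul_left ?_ hn⟩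
  · rw [max_eq_left hkr] at key
    exact Nat.le_of_mul_le_mul_left key hn
  · have hchoose := Nat.add_one_mul_choose_eq (n - 1) (r - 1)
    rw [Nat.sub_add_cancel hn, Nat.sub_add_cancel hr₀] at hchoose
    calc n * ∑ i, #(𝒜 i) ≤ k * r * n.choose r := max_eq_right hnk ▸ key
      _ = n * (k * (n - 1).choose (r - 1)) := by rw [mul_left_comm, hchoose]; ring
end
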